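/- Let G be a group, ψ : G → ℤ a group homomorphism, and K = ker ψ. Let A ≤ G be a subgroup and suppose there exists b₀ ∈ G with ψ(b₀) = 1 which commutes with every element of A. Then the commutator subgroup ⁅A,A⁆ of A is contained in ⁅K,K⁆. -/

import Mathlib

/-!
Correcting `a ∈ A` by the power `b₀ ^ (-ψ a)` lands it in `K = ker ψ`. Since `b₀` commutes with
all of `A`, these corrections do not change commutators of elements of `A`, so every generator
`⁅a, c⁆` of `⁅A, A⁆` is a commutator of two elements of `K`.
-/

open scoped commutatorElement

section Commutator

variable {G : Type*} [Group G] {a b c : G}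

theorem commutatorElement_mul_right_of_commute (h : Commute a c) : ⁅a, b * c⁆ = ⁅a, b⁆ := by
  rw [commutatorElement_mul_right_eq_mul_conj, (commutatorElement_eq_one_iff_commute).2 h,
    mul_one, mul_inv_cancel_right]

theorem commutatorElement_mul_left_of_commute (h : Commute b c) : ⁅a * b, c⁆ = ⁅a, c⁆ := by
  rw [commutatorElement_mul_left_eq_conj_mul, (commutatorElement_eq_one_iff_commute).2 h,
    mul_one, mul_inv_cancel, one_mul]

end Commutator

theorem MonoidHom.mul_zpow_neg_mem_ker {G : Type*} [Group G] {ψ : G →* Multiplicative ℤ} {b : G}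
    (hb : ψ b = Multiplicative.ofAdd 1) (g : G) : g * b ^ (-(ψ g).toAdd) ∈ ψ.ker := by
  rw [MonoidHom.mem_ker, map_mul, map_zpow, hb, ← ofAdd_zsmul, smul_eq_mul, mul_one,
    ← ofAdd_toAdd (ψ g), ← ofAdd_add, toAdd_ofAdd, add_neg_cancel, ofAdd_zero]

/-- Let `G` be a group, `ψ : G → ℤ` a group homomorphism (with `ℤ` viewed
multiplicatively as `Multiplicative ℤ`), and `K = ker ψ`. Let `A ≤ G` be a subgroup and
suppose there exists `b₀ ∈ G` of length one (`ψ b₀ = 1`) commuting with every element of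
`A`. Then `⁅A, A⁆ ≤ ⁅K, K⁆`. -/
theorem commutator_subgroup_le_of_commuting_length_one
    {G : Type*} [Group G] (ψ : G →* Multiplicative ℤ) (A : Subgroup G)
    (b₀ : G) (hb₀ : ψ b₀ = Multiplicative.ofAdd 1)
    (hcomm : ∀ a ∈ A, b₀ * a = a * b₀) :
    ⁅A, A⁆ ≤ ⁅ψ.ker, ψ.ker⁆ := by
  rw [Subgroup.commutator_le]
  intro a ha c hc
  have hb₀a : Commute b₀ a := hcomm a ha
  have hb₀c : Commute b₀ c := hcomm c hc
  have hcorr : ⁅a, c⁆ = ⁅a * b₀ ^ (-(ψ a).toAdd), c * b₀ ^ (-(ψ c).toAdd)⁆ := by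
    rw [commutatorElement_mul_right_of_commute
        ((hb₀a.symm.mul_left ((Commute.refl b₀).zpow_left _)).zpow_right _),
      commutatorElement_mul_left_of_commute (hb₀c.zpow_left _)]
  rw [hcorr]
  exact Subgroup.commutator_mem_commutator (ψ.mul_zpow_neg_mem_ker hb₀ a)
    (ψ.mul_zpow_neg_mem_ker hb₀ c)
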